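/- Let w_1, …, w_n : ℝ → ℂ be twice-differentiable curves with Im w_k(t) > 0 and w_k(t) ≠ w_j(t) for k ≠ j at every time t, forming a solution of the curved n-body problem in the Poincaré upper half plane. If the curves t ↦ w_k(t) + t (k = 1,…,n) also form a solution of the same system, then for every k and every t one has ẇ_k(t) = −1/2; equivalently, w_k(t) = w_k(0) − t/2 for all t. -/

import Mathlib

/-!
Every term of the equations of motion except the kinetic term `2 ẇ_k² / (w_k − w̄_k)` depends
on the positions only through differences `w_k − w_j`, `w̄_j − w_k`, `w̄_j − w_j` and through
`Θ`, all of which are invariant under real translations `w ↦ w + t`. The translated curves have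
the same acceleration and velocity `ẇ_k + 1`, so comparing the two systems leaves
`ẇ_k² = (ẇ_k + 1)²`, i.e. `ẇ_k = −1/2`, and integrating gives `w_k(t) = w_k(0) − t/2`.
-/

open Complex ComplexConjugate Finset

/-- The quantity `Θ_{3,(k,j)}` appearing in the denominators of the equations of
motion of the curved `n`-body problem in the Poincaré upper half plane. -/
noncomputable def halfTheta (z w : ℂ) : ℝ :=
  (((conj z + z) * (conj w + w)
      - 2 * ((((‖z‖) ^ 2 + (‖w‖) ^ 2 : ℝ)) : ℂ)) ^ 2
    - (conj z - z) ^ 2 * (conj w - w) ^ 2).re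

/-- The curves `w k` form a solution of the curved `n`-body problem in the Poincaré
upper half plane with parameter `R` and masses `m`. -/
def IsHalfPlaneSolution (R : ℝ) {n : ℕ} (m : Fin n → ℝ) (w : Fin n → ℝ → ℂ) : Prop :=
  ∀ (k : Fin n) (t : ℝ),
    deriv (deriv (w k)) t
      = 2 * (deriv (w k) t) ^ 2 / (w k t - conj (w k t))
        - (2 * (w k t - conj (w k t)) ^ 2 / (R : ℂ)) *
          ∑ j ∈ Finset.univ.erase k,
            (m j : ℂ) * (conj (w k t) - w k t) * (conj (w j t) - w j t) ^ 2
              * (w k t - w j t) * (conj (w j t) - w k t)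
              / (((halfTheta (w k t) (w j t)) ^ ((3 : ℝ) / 2) : ℝ) : ℂ)

lemma halfTheta_add_ofReal (z w : ℂ) (t : ℝ) :
    halfTheta (z + t) (w + t) = halfTheta z w := by
  have norm_sq (u : ℂ) : ((‖u‖ : ℂ)) ^ 2 = u * conj u := by
    rw [← ofReal_pow, ← normSq_eq_norm_sq, mul_conj]
  unfold halfTheta
  push_cast
  simp only [norm_sq, map_add, conj_ofReal]
  ring_nf

lemma sub_conj_ne_zero_of_im_pos {z : ℂ} (hz : 0 < z.im) : z - conj z ≠ 0 := by
  rw [sub_conj]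
  exact mul_ne_zero (ofReal_ne_zero.mpr (by positivity)) I_ne_zero

lemma deriv_add_ofReal {f : ℝ → ℂ} (hf : Differentiable ℝ f) :
    deriv (fun s : ℝ => f s + s) = fun s => deriv f s + 1 := by
  funext s
  exact ((hf s).hasDerivAt.add (hasDerivAt_id s).ofReal_comp).deriv

lemma apply_eq_apply_zero_add_smul_of_deriv_eq_const {E : Type*} [NormedAddCommGroup E]
    [NormedSpace ℝ E] {f : ℝ → E} {c : E} (hf : Differentiable ℝ f)
    (hderiv : ∀ s, deriv f s = c) (t : ℝ) : f t = f 0 + t • c := by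
  have hg : ∀ s, HasDerivAt (fun s => f s - s • c) 0 s := fun s => by
    have := (hf s).hasDerivAt.sub ((hasDerivAt_id s).smul_const c)
    rwa [hderiv s, one_smul, sub_self] at this
  have := is_const_of_deriv_eq_zero (fun s => (hg s).differentiableAt)
    (fun s => (hg s).deriv) t 0
  simp only [zero_smul, sub_zero] at this
  rw [← this, sub_add_cancel]

lemma IsHalfPlaneSolution.deriv_eq_neg_half_of_add_ofReal {R : ℝ} {n : ℕ} {m : Fin n → ℝ}
    {w : Fin n → ℝ → ℂ} (hw : ∀ k, Differentiable ℝ (w k)) (hup : ∀ k t, 0 < (w k t).im)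
    (hsol : IsHalfPlaneSolution R m w)
    (hsol' : IsHalfPlaneSolution R m (fun k t => w k t + (t : ℂ))) (k : Fin n) (t : ℝ) :
    deriv (w k) t = -(1 / 2) := by
  have hd := sub_conj_ne_zero_of_im_pos (hup k t)
  have hshift := hsol' k t
  have conj_add (z : ℂ) : conj (z + t) = conj z + t := by rw [map_add, conj_ofReal]
  have sub_cancel (a b : ℂ) : a + t - (b + t) = a - b := add_sub_add_right_eq_sub a b t
  simp only [deriv_add_ofReal (hw k), deriv_add_const, conj_add, halfTheta_add_ofReal,
    sub_cancel] at hshift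
  have hkin := sub_left_inj.mp ((hsol k t).symm.trans hshift)
  rw [div_left_inj' hd] at hkin
  linear_combination (-1 / 4 : ℂ) * hkin

theorem parabolic_action_invariance_general (R : ℝ) (n : ℕ)
    (m : Fin n → ℝ)
    (w : Fin n → ℝ → ℂ)
    (hw1 : ∀ k, Differentiable ℝ (w k))
    (hup : ∀ k t, 0 < (w k t).im)
    (hsol : IsHalfPlaneSolution R m w)
    (hsol' : IsHalfPlaneSolution R m (fun k t => w k t + (t : ℂ))) :
    ∀ k t, deriv (w k) t = -(1 / 2) ∧ w k t = w k 0 - (t : ℂ) / 2 := by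
  have hv := IsHalfPlaneSolution.deriv_eq_neg_half_of_add_ofReal hw1 hup hsol hsol'
  intro k t
  refine ⟨hv k t, ?_⟩
  rw [apply_eq_apply_zero_add_smul_of_deriv_eq_const (hw1 k) (hv k) t, real_smul]
  ring

/-- If a solution of the curved `n`-body problem in the Poincaré upper half plane
remains a solution after the action `w ↦ w + t`, then every body satisfies
`ẇ_k = −1/2`, i.e. `w_k(t) = w_k(0) − t/2`. -/
theorem parabolic_action_invariance (R : ℝ) (hR : 0 < R) (n : ℕ) (hn : 2 ≤ n)
    (m : Fin n → ℝ) (hm : ∀ k, 0 < m k)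
    (w : Fin n → ℝ → ℂ)
    (hw1 : ∀ k, Differentiable ℝ (w k))
    (hw2 : ∀ k, Differentiable ℝ (deriv (w k)))
    (hup : ∀ k t, 0 < (w k t).im)
    (hsep : ∀ k j, k ≠ j → ∀ t, w k t ≠ w j t)
    (hsol : IsHalfPlaneSolution R m w)
    (hsol' : IsHalfPlaneSolution R m (fun k t => w k t + (t : ℂ))) :
    ∀ k t, deriv (w k) t = -(1 / 2) ∧ w k t = w k 0 - (t : ℂ) / 2 :=
  parabolic_action_invariance_general R n m w hw1 hup hsol hsol'
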